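/- arXiv:2601.21984 — 4 statements merged into one kernel-verified Lean document; each statement's English description precedes it below -/
import Mathlib

section
/- Let ι be a finite index type, a¹, a², v¹, v² : ι → ℝ families of real numbers, q ∈ ℝ, C : ι → ℝ with C_i ≠ 0 for all i, and V_OUT ∈ ℝ. Suppose (i) a¹_i + a²_i = 0 for every i, (ii) v²_i − v¹_i = a²_i · q / C_i for every i, and (iii) V_OUT + Σ_{i∈ι} (a¹_i · v¹_i + a²_i · v²_i) = 0. Then V_OUT = −q · Σ_{i∈ι} (a²_i)² / C_i. -/
theorem mul_add_mul_eq_mul_sub_of_add_eq_zero {R : Type*} [CommRing R] {x y : R} (u w : R)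
    (h : x + y = 0) : x * u + y * w = y * (w - u) := by
  linear_combination u * h

theorem ssl_output_impedance_general (ι : Type*) [Fintype ι]
    (a1 a2 v1 v2 : ι → ℝ) (q : ℝ) (C : ι → ℝ)
    (VOUT : ℝ)
    (hcons : ∀ i, a1 i + a2 i = 0)
    (hcap : ∀ i, v2 i - v1 i = a2 i * q / C i)
    (hbal : VOUT + ∑ i, (a1 i * v1 i + a2 i * v2 i) = 0) :
    VOUT = -q * ∑ i, (a2 i) ^ 2 / C i := by
  have hterm : ∀ i, a1 i * v1 i + a2 i * v2 i = q * (a2 i ^ 2 / C i) := fun i => by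
    rw [mul_add_mul_eq_mul_sub_of_add_eq_zero _ _ (hcons i), hcap i]
    ring
  rw [Finset.sum_congr rfl fun i _ => hterm i, ← Finset.mul_sum] at hbal
  linarith

/-- SSL output-impedance identity. -/
theorem ssl_output_impedance (ι : Type*) [Fintype ι]
    (a1 a2 v1 v2 : ι → ℝ) (q : ℝ) (C : ι → ℝ) (hC : ∀ i, C i ≠ 0)
    (VOUT : ℝ)
    (hcons : ∀ i, a1 i + a2 i = 0)
    (hcap : ∀ i, v2 i - v1 i = a2 i * q / C i)
    (hbal : VOUT + ∑ i, (a1 i * v1 i + a2 i * v2 i) = 0) :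
    VOUT = -q * ∑ i, (a2 i) ^ 2 / C i :=
  ssl_output_impedance_general ι a1 a2 v1 v2 q C VOUT hcons hcap hbal
end

section
/- Let ι be a nonempty finite index type, a, v : ι → ℝ with a_i ≠ 0 and v_i ≠ 0 for all i, and E > 0 a real number. Set S = Σ_{k∈ι} |a_k| · |v_k| and define C*_i = (2E / |v_i|) · (|a_i| / S) for each i. Then C*_i > 0 for all i, the energy constraint (1/2) · Σ_{i∈ι} C*_i · v_i² = E holds, and Σ_{i∈ι} a_i² / C*_i = S² / (2E). -/
/-!
Writing `w i = |a i| * |v i|`, the allocation gives `C*_i v_i² = 2E · w i / S` and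
`a_i² / C*_i = w i · S / (2E)`, so both sums collapse to multiples of `∑ w i = S`.
-/

open Finset

section Pointwise

variable {a v E S : ℝ}

lemma sizing_mul_sq (hv : v ≠ 0) :
    2 * E / |v| * (|a| / S) * v ^ 2 = 2 * E * (|a| * |v| / S) := by
  have hv' : |v| ≠ 0 := abs_ne_zero.mpr hv
  rw [← sq_abs v]
  field_simp

lemma sq_div_sizing (ha : a ≠ 0) (hv : v ≠ 0) (hE : E ≠ 0) (hS : S ≠ 0) :
    a ^ 2 / (2 * E / |v| * (|a| / S)) = |a| * |v| * (S / (2 * E)) := by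
  have ha' : |a| ≠ 0 := abs_ne_zero.mpr ha
  have hv' : |v| ≠ 0 := abs_ne_zero.mpr hv
  rw [← sq_abs a]
  field_simp

end Pointwise

lemma sum_abs_mul_abs_pos {ι : Type*} [Fintype ι] [Nonempty ι] {a v : ι → ℝ}
    (ha : ∀ i, a i ≠ 0) (hv : ∀ i, v i ≠ 0) : 0 < ∑ k, |a k| * |v k| :=
  sum_pos (fun i _ => mul_pos (abs_pos.mpr (ha i)) (abs_pos.mpr (hv i))) univ_nonempty

/-- Optimal capacitor sizing formula (SSL). -/
theorem ssl_optimal_sizing (ι : Type*) [Fintype ι] [Nonempty ι]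
    (a v : ι → ℝ) (ha : ∀ i, a i ≠ 0) (hv : ∀ i, v i ≠ 0)
    (E : ℝ) (hE : E > 0) :
    let S := ∑ k, |a k| * |v k|
    let Cstar : ι → ℝ := fun i => (2 * E / |v i|) * (|a i| / S)
    (∀ i, Cstar i > 0) ∧
      (1 / 2) * ∑ i, Cstar i * v i ^ 2 = E ∧
      ∑ i, a i ^ 2 / Cstar i = S ^ 2 / (2 * E) := by
  intro S Cstar
  have hS : 0 < S := sum_abs_mul_abs_pos ha hv
  refine ⟨fun i => ?_, ?_, ?_⟩
  · exact mul_pos (div_pos (by positivity) (abs_pos.mpr (hv i))) (div_pos (abs_pos.mpr (ha i)) hS)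
  · calc (1 / 2) * ∑ i, Cstar i * v i ^ 2
        = (1 / 2) * (2 * E * ((∑ i, |a i| * |v i|) / S)) := by
          simp only [Cstar, sizing_mul_sq (hv _), ← mul_sum, sum_div]
      _ = E := by rw [div_self hS.ne']; ring
  · calc ∑ i, a i ^ 2 / Cstar i
        = (∑ i, |a i| * |v i|) * (S / (2 * E)) := by
          simp only [Cstar, sq_div_sizing (ha _) (hv _) hE.ne' hS.ne', sum_mul]
      _ = S ^ 2 / (2 * E) := by ring
end

section
/- Let ι be a nonempty finite index type, a, v : ι → ℝ with a_i ≠ 0 and v_i ≠ 0 for all i, and E > 0. Set S = Σ_{k∈ι} |a_k| · |v_k|. Then S² / (2E) is the least element of the set { r ∈ ℝ | ∃ C : ι → ℝ, (∀ i, C_i > 0) ∧ (1/2) · Σ_i C_i · v_i² = E ∧ r = Σ_i a_i² / C_i }. Consequently, for any M ∈ ℝ and f > 0, writing R* = S²/(2E·f) for the minimized SSL output impedance, the SSL performance metric M_SSL := (M² / R*) / (E · f) equals 2M² / S². -/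
/-!
Cauchy–Schwarz applied to `|aᵢ| |vᵢ| = (|aᵢ| / √Cᵢ) (√Cᵢ |vᵢ|)` gives
`S² ≤ (∑ aᵢ² / Cᵢ) (∑ Cᵢ vᵢ²) = 2E · ∑ aᵢ² / Cᵢ` for every admissible sizing `C`, with equality
exactly when `Cᵢ` is proportional to `|aᵢ| / |vᵢ|`; scaling that choice to meet the energy
budget attains the bound.
-/

open Finset

section

variable {ι : Type*}

lemma sq_sum_abs_mul_abs_le_sum_sq_div_mul_sum (s : Finset ι) (a v : ι → ℝ) {C : ι → ℝ}
    (hC : ∀ i ∈ s, 0 < C i) :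
    (∑ i ∈ s, |a i| * |v i|) ^ 2 ≤ (∑ i ∈ s, a i ^ 2 / C i) * ∑ i ∈ s, C i * v i ^ 2 := by
  refine sum_sq_le_sum_mul_sum_of_sq_le_mul s
    (fun i hi => div_nonneg (sq_nonneg _) (hC i hi).le)
    (fun i hi => mul_nonneg (hC i hi).le (sq_nonneg _)) fun i hi => le_of_eq ?_
  have := (hC i hi).ne'
  rw [mul_pow, sq_abs, sq_abs]
  field_simp

noncomputable def optimalSizing (t : ℝ) (a v : ι → ℝ) (i : ι) : ℝ := t * |a i| / |v i|

lemma optimalSizing_pos {t : ℝ} {a v : ι → ℝ} {i : ι} (ht : 0 < t) (ha : a i ≠ 0)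
    (hv : v i ≠ 0) : 0 < optimalSizing t a v i := by
  unfold optimalSizing
  positivity

lemma sum_optimalSizing_mul_sq (s : Finset ι) (t : ℝ) (a v : ι → ℝ) :
    ∑ i ∈ s, optimalSizing t a v i * v i ^ 2 = t * ∑ i ∈ s, |a i| * |v i| := by
  rw [mul_sum]
  refine sum_congr rfl fun i _ => ?_
  unfold optimalSizing
  rcases eq_or_ne (v i) 0 with hv | hv
  · simp [hv]
  · rw [← sq_abs (v i)]
    field_simp [abs_ne_zero.mpr hv]

-- No side conditions: if `aᵢ`, `vᵢ` or `t` vanishes, both sides of the `i`-th term are `0`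
-- because `x / 0 = 0`.
lemma sum_sq_div_optimalSizing (s : Finset ι) (t : ℝ) (a v : ι → ℝ) :
    ∑ i ∈ s, a i ^ 2 / optimalSizing t a v i = (∑ i ∈ s, |a i| * |v i|) / t := by
  rw [sum_div]
  refine sum_congr rfl fun i _ => ?_
  unfold optimalSizing
  rcases eq_or_ne (a i) 0 with ha | ha
  · simp [ha]
  rcases eq_or_ne (v i) 0 with hv | hv
  · simp [hv]
  rcases eq_or_ne t 0 with ht | ht
  · simp [ht]
  rw [← sq_abs (a i)]
  field_simp [abs_ne_zero.mpr ha, abs_ne_zero.mpr hv]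

end

/-- SSL Metric theorem: `S²/(2E)` is the least achievable SSL impedance
coefficient, and hence the SSL metric equals `2M²/S²`. -/
theorem ssl_metric (ι : Type*) [Fintype ι] [Nonempty ι]
    (a v : ι → ℝ) (ha : ∀ i, a i ≠ 0) (hv : ∀ i, v i ≠ 0)
    (E : ℝ) (hE : E > 0) (M f : ℝ) (hf : f > 0) :
    let S := ∑ k, |a k| * |v k|
    IsLeast
      {r : ℝ | ∃ C : ι → ℝ, (∀ i, C i > 0) ∧
        (1 / 2) * ∑ i, C i * v i ^ 2 = E ∧ r = ∑ i, a i ^ 2 / C i}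
      (S ^ 2 / (2 * E)) ∧
    (M ^ 2 / (S ^ 2 / (2 * E * f))) / (E * f) = 2 * M ^ 2 / S ^ 2 := by
  intro S
  have hS : 0 < S := sum_pos (fun i _ => mul_pos (abs_pos.mpr (ha i)) (abs_pos.mpr (hv i)))
    univ_nonempty
  refine ⟨⟨⟨optimalSizing (2 * E / S) a v,
    fun i => optimalSizing_pos (by positivity) (ha i) (hv i), ?_, ?_⟩, ?_⟩, ?_⟩
  · rw [sum_optimalSizing_mul_sq]
    change 1 / 2 * (2 * E / S * S) = E
    field_simp
  · rw [sum_sq_div_optimalSizing]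
    change S ^ 2 / (2 * E) = S / (2 * E / S)
    field_simp
  · rintro r ⟨C, hC, hbudget, rfl⟩
    have hCS := sq_sum_abs_mul_abs_le_sum_sq_div_mul_sum univ a v fun i _ => hC i
    rw [show ∑ i, C i * v i ^ 2 = 2 * E by linarith] at hCS
    rwa [div_le_iff₀ (by positivity)]
  · field_simp
end

section
/- Let ι be a nonempty finite index type, a, v : ι → ℝ with a_i ≠ 0 and v_i ≠ 0 for all i, and X > 0. Set S = Σ_{k∈ι} |a_k| · |v_k|. Then 2S² / X is the least element of the set { r ∈ ℝ | ∃ G : ι → ℝ, (∀ i, G_i > 0) ∧ Σ_i G_i · v_i² = X ∧ r = Σ_i 2 · a_i² / G_i }. Consequently, for any M ∈ ℝ, writing R* = 2S²/X for the minimized FSL output impedance, the FSL performance metric M_FSL := (M² / R*) / X equals M² / (2S²). -/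
/-!
Cauchy–Schwarz, applied to the pairing `|aᵢ||vᵢ| = √(Gᵢ vᵢ²) · √(aᵢ²/Gᵢ)`, gives
`S² ≤ (∑ Gᵢ vᵢ²)(∑ aᵢ²/Gᵢ) = X ∑ aᵢ²/Gᵢ`, so no sizing within the budget beats `2S²/X`.
Equality holds when the two vectors are proportional, i.e. for `Gᵢ ∝ |aᵢ|/|vᵢ|`,
scaled by `X/S` to spend the whole budget.
-/

open Finset

section

variable {ι : Type*} (s : Finset ι) (a v : ι → ℝ)

theorem sq_sum_abs_mul_abs_le_sum_mul_sum_div {G : ι → ℝ} (hG : ∀ i ∈ s, 0 < G i) :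
    (∑ i ∈ s, |a i| * |v i|) ^ 2 ≤ (∑ i ∈ s, G i * v i ^ 2) * ∑ i ∈ s, a i ^ 2 / G i := by
  refine sum_sq_le_sum_mul_sum_of_sq_le_mul s
    (fun i hi => mul_nonneg (hG i hi).le (sq_nonneg _))
    (fun i hi => div_nonneg (sq_nonneg _) (hG i hi).le) fun i hi => le_of_eq ?_
  have := (hG i hi).ne'
  rw [mul_pow, sq_abs, sq_abs]
  field_simp

noncomputable def proportionalSizing (t : ℝ) (i : ι) : ℝ := t * (|a i| / |v i|)

theorem proportionalSizing_pos {t : ℝ} (ht : 0 < t) {i : ι} (ha : a i ≠ 0) (hv : v i ≠ 0) :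
    0 < proportionalSizing a v t i :=
  mul_pos ht (div_pos (abs_pos.mpr ha) (abs_pos.mpr hv))

theorem sum_proportionalSizing_mul_sq (t : ℝ) (hv : ∀ i ∈ s, v i ≠ 0) :
    ∑ i ∈ s, proportionalSizing a v t i * v i ^ 2 = t * ∑ i ∈ s, |a i| * |v i| := by
  rw [mul_sum]
  refine sum_congr rfl fun i hi => ?_
  have := abs_pos.mpr (hv i hi)
  rw [proportionalSizing, ← sq_abs (v i)]
  field_simp

theorem sum_two_mul_sq_div_proportionalSizing (t : ℝ) (ha : ∀ i ∈ s, a i ≠ 0)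
    (hv : ∀ i ∈ s, v i ≠ 0) :
    ∑ i ∈ s, 2 * a i ^ 2 / proportionalSizing a v t i = 2 / t * ∑ i ∈ s, |a i| * |v i| := by
  rw [mul_sum]
  refine sum_congr rfl fun i hi => ?_
  have := abs_pos.mpr (ha i hi)
  have := abs_pos.mpr (hv i hi)
  rw [proportionalSizing, ← sq_abs (a i)]
  field_simp

end

/-- FSL Metric theorem: `2S²/X` is the least achievable FSL output impedance,
and hence the FSL metric equals `M²/(2S²)`. -/
theorem fsl_metric (ι : Type*) [Fintype ι] [Nonempty ι]
    (a v : ι → ℝ) (ha : ∀ i, a i ≠ 0) (hv : ∀ i, v i ≠ 0)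
    (X : ℝ) (hX : X > 0) (M : ℝ) :
    let S := ∑ k, |a k| * |v k|
    IsLeast
      {r : ℝ | ∃ G : ι → ℝ, (∀ i, G i > 0) ∧
        ∑ i, G i * v i ^ 2 = X ∧ r = ∑ i, 2 * a i ^ 2 / G i}
      (2 * S ^ 2 / X) ∧
    (M ^ 2 / (2 * S ^ 2 / X)) / X = M ^ 2 / (2 * S ^ 2) := by
  intro S
  have hS : 0 < S := sum_pos (fun i _ => mul_pos (abs_pos.mpr (ha i)) (abs_pos.mpr (hv i)))
    univ_nonempty
  refine ⟨⟨⟨proportionalSizing a v (X / S), fun i => ?_, ?_, ?_⟩, ?_⟩, by field_simp⟩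
  · exact proportionalSizing_pos a v (div_pos hX hS) (ha i) (hv i)
  · rw [sum_proportionalSizing_mul_sq _ _ _ _ fun i _ => hv i]
    field_simp
    rfl
  · rw [sum_two_mul_sq_div_proportionalSizing _ _ _ _ (fun i _ => ha i) fun i _ => hv i]
    field_simp
    ring
  · rintro r ⟨G, hG, hGX, rfl⟩
    have hCS := sq_sum_abs_mul_abs_le_sum_mul_sum_div univ a v fun i _ => hG i
    rw [hGX] at hCS
    simp_rw [mul_div_assoc, ← mul_sum]
    gcongr
    exact (div_le_iff₀' hX).2 hCS
end
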